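/- Let G be the join of an edgeless graph on j ≥ 1 vertices with a complete graph on m vertices (i.e., a complete split graph: m universal vertices all mutually adjacent and adjacent to j pairwise non-adjacent vertices). Then the number of moral acyclic orientations of G equals (j·m + 1)·m!. -/

import Mathlib

/-- A chord of a closed walk: an edge of `G` between two vertices of the walk
that is not an edge of the walk. -/
def SimpleGraph.Walk.HasChord {V : Type*} {G : SimpleGraph V} {v : V}
    (c : G.Walk v v) : Prop :=
  ∃ a b, a ∈ c.support ∧ b ∈ c.support ∧ G.Adj a b ∧ s(a, b) ∉ c.edges

/-- A graph is chordal if every cycle with four or more vertices has a chord. -/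
def SimpleGraph.IsChordalGraph {V : Type*} (G : SimpleGraph V) : Prop :=
  ∀ (v : V) (c : G.Walk v v), c.IsCycle → 4 ≤ c.length → c.HasChord

/-- A vertex is dominating if it is adjacent to every other vertex. -/
def SimpleGraph.IsDominatingVertex {V : Type*} (G : SimpleGraph V) (v : V) : Prop :=
  ∀ w, w ≠ v → G.Adj v w

/-- `D` is an orientation of `G`: each edge gets exactly one direction. -/
def SimpleGraph.IsOrientation {V : Type*} (G : SimpleGraph V) (D : V → V → Prop) : Prop :=
  (∀ a b, G.Adj a b ↔ (D a b ∨ D b a)) ∧ ∀ a b, ¬(D a b ∧ D b a)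

/-- An orientation (directed relation) is acyclic if it has no directed cycle. -/
def IsAcyclicRel {V : Type*} (D : V → V → Prop) : Prop :=
  ∀ a, ¬ Relation.TransGen D a a

/-- An orientation is moral (w.r.t. `G`) if it contains no v-structure. -/
def SimpleGraph.IsMoralOrient {V : Type*} (G : SimpleGraph V) (D : V → V → Prop) : Prop :=
  ∀ a b c, D a c → D b c → a ≠ b → G.Adj a b

/-- The number of moral acyclic orientations of `G`. -/
noncomputable def moralAcyclicCount {V : Type*} (G : SimpleGraph V) : ℕ :=
  Set.ncard {D : V → V → Prop |
    G.IsOrientation D ∧ IsAcyclicRel D ∧ G.IsMoralOrient D}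

/-- Join of two graphs: all edges of each plus all edges across. -/
def joinGraph {V1 V2 : Type*} (G1 : SimpleGraph V1) (G2 : SimpleGraph V2) :
    SimpleGraph (V1 ⊕ V2) where
  Adj x y := match x, y with
    | .inl a, .inl b => G1.Adj a b
    | .inr a, .inr b => G2.Adj a b
    | .inl _, .inr _ => True
    | .inr _, .inl _ => True
  symm := ⟨by rintro (a | a) (b | b) h <;> simp_all [SimpleGraph.adj_comm]⟩
  loopless := ⟨by rintro (a | a) h <;> simp_all⟩

/-- Disjoint union of two graphs. -/
def sumGraph {V1 V2 : Type*} (G1 : SimpleGraph V1) (G2 : SimpleGraph V2) :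
    SimpleGraph (V1 ⊕ V2) where
  Adj x y := match x, y with
    | .inl a, .inl b => G1.Adj a b
    | .inr a, .inr b => G2.Adj a b
    | _, _ => False
  symm := ⟨by rintro (a | a) (b | b) h <;> simp_all [SimpleGraph.adj_comm]⟩
  loopless := ⟨by rintro (a | a) h <;> simp_all⟩

/-! An acyclic orientation of the clique `K_m` is a linear order of its vertices. Acyclicity
forces the in-neighbourhood of an independent vertex to be an initial segment of this order, and
morality forbids two independent vertices to share a clique out-neighbour, so all independent
vertices but at most one are sinks. A moral acyclic orientation is therefore the choice of a linear
order (`m!` ways) and of either nothing or one independent vertex with the length `< m` of its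
segment (`j m + 1` ways). Placing the vertices at positions `2 f v + 1` and `2 ρ r + 2` and
orienting every edge upwards makes this a bijection. -/

namespace SimpleGraph

variable {V W α : Type*} {G : SimpleGraph V} {D D' : V → V → Prop} {a b c : V}

def orientBy [LT α] (G : SimpleGraph V) (p : V → α) : V → V → Prop :=
  fun a b => G.Adj a b ∧ p a < p b

theorem isOrientation_orientBy [LinearOrder α] {p : V → α}
    (hp : ∀ a b, G.Adj a b → p a ≠ p b) : G.IsOrientation (G.orientBy p) := by
  refine ⟨fun a b => ⟨fun h => ?_, ?_⟩, fun a b ⟨hab, hba⟩ => hab.2.not_gt hba.2⟩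
  · rcases (hp a b h).lt_or_gt with hlt | hlt
    exacts [Or.inl ⟨h, hlt⟩, Or.inr ⟨h.symm, hlt⟩]
  · rintro (h | h)
    exacts [h.1, h.1.symm]

theorem isAcyclicRel_orientBy [Preorder α] (p : V → α) : IsAcyclicRel (G.orientBy p) :=
  fun a h => lt_irrefl (p a) <|
    Relation.transGen_minimal (r' := Function.onFun (· < ·) p) (fun _ _ hab => hab.2) a a h

namespace IsOrientation

theorem adj (hD : G.IsOrientation D) (h : D a b) : G.Adj a b :=
  (hD.1 a b).2 (Or.inl h)

theorem rel_or_rel (hD : G.IsOrientation D) (h : G.Adj a b) : D a b ∨ D b a :=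
  (hD.1 a b).1 h

theorem asymm (hD : G.IsOrientation D) (h : D a b) : ¬ D b a :=
  fun h' => hD.2 a b ⟨h, h'⟩

theorem eq_of_le (hD : G.IsOrientation D) (hD' : G.IsOrientation D')
    (h : ∀ a b, D a b → D' a b) : D = D' := by
  funext a b
  refine propext ⟨h a b, fun h' => ?_⟩
  exact (hD.rel_or_rel (hD'.adj h')).resolve_right fun hba => hD'.asymm h' (h b a hba)

theorem trans_of_adj (hD : G.IsOrientation D) (hAc : IsAcyclicRel D) (hab : D a b)
    (hbc : D b c) (hac : G.Adj a c) : D a c :=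
  (hD.rel_or_rel hac).resolve_right fun hca =>
    hAc a (((Relation.TransGen.single hab).tail hbc).tail hca)

theorem comap (hD : G.IsOrientation D) (f : W → V) :
    (G.comap f).IsOrientation (fun a b => D (f a) (f b)) :=
  ⟨fun a b => hD.1 (f a) (f b), fun a b => hD.2 (f a) (f b)⟩

theorem ncard_lt_of_rel [Finite W] (hD : G.IsOrientation D) (hAc : IsAcyclicRel D)
    {φ : W → V} {r : W} (h : D (φ r) b) (hadj : ∀ x, D (φ x) (φ r) → G.Adj (φ x) b) :
    {x | D (φ x) (φ r)}.ncard < {x | D (φ x) b}.ncard := by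
  have hsub : insert r {x | D (φ x) (φ r)} ⊆ {x | D (φ x) b} := by
    rintro x (rfl | hx)
    exacts [h, hD.trans_of_adj hAc hx h (hadj x hx)]
  have hnot : r ∉ {x | D (φ x) (φ r)} := fun h => hD.asymm h h
  calc _ < (insert r {x | D (φ x) (φ r)}).ncard := by
        rw [Set.ncard_insert_of_notMem hnot]; omega
    _ ≤ _ := Set.ncard_le_ncard hsub

end IsOrientation

end SimpleGraph

theorem IsAcyclicRel.comap {V W : Type*} {D : V → V → Prop} (hAc : IsAcyclicRel D) (f : W → V) :
    IsAcyclicRel (fun a b => D (f a) (f b)) :=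
  fun a h => hAc (f a) (h.lift f fun _ _ => id)

namespace SimpleGraph.IsOrientation

variable {α : Type*} [Finite α] {D : α → α → Prop} {a b : α}

theorem ncard_setOf_rel_lt (hD : (⊤ : SimpleGraph α).IsOrientation D) (hAc : IsAcyclicRel D)
    (hab : D a b) : {x | D x a}.ncard < {x | D x b}.ncard :=
  hD.ncard_lt_of_rel (φ := id) hAc hab fun _ hxa hxb => hD.asymm hab (hxb ▸ hxa)

theorem exists_equiv_fin_ncard (hD : (⊤ : SimpleGraph α).IsOrientation D)
    (hAc : IsAcyclicRel D) :
    ∃ ρ : α ≃ Fin (Nat.card α), ∀ a, (ρ a : ℕ) = {x | D x a}.ncard := by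
  have hlt : ∀ a, {x | D x a}.ncard < Nat.card α := fun a => Set.ncard_lt_card fun h =>
    have haa : D a a := Set.eq_univ_iff_forall.mp h a
    hD.asymm haa haa
  let rank : α → Fin (Nat.card α) := fun a => ⟨{x | D x a}.ncard, hlt a⟩
  have hinj : Function.Injective rank := by
    intro a b h
    by_contra hab
    rcases hD.rel_or_rel hab with h' | h'
    · exact (hD.ncard_setOf_rel_lt hAc h').ne (congrArg Fin.val h)
    · exact (hD.ncard_setOf_rel_lt hAc h').ne (congrArg Fin.val h).symm
  exact ⟨Equiv.ofBijective rank (hinj.bijective_of_nat_card_le (Nat.card_fin _).le), fun _ => rfl⟩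

end SimpleGraph.IsOrientation

theorem Equiv.ncard_setOf_val_lt {κ : Type*} {n t : ℕ} (ρ : κ ≃ Fin n) (ht : t ≤ n) :
    {r | (ρ r : ℕ) < t}.ncard = t := by
  have hsub : Set.Iio t ⊆ Set.range (Fin.val ∘ ρ) := fun k hk =>
    ⟨ρ.symm ⟨k, lt_of_lt_of_le hk ht⟩, by simp⟩
  exact (Set.ncard_preimage_of_injective_subset_range (Fin.val_injective.comp ρ.injective)
    hsub).trans (Set.ncard_Iio_nat t)

theorem Nat.card_setOf_ne_subsingleton {ι β : Type*} [Finite ι] [Finite β] [DecidableEq ι]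
    (b : β) :
    Nat.card {f : ι → β // {i | f i ≠ b}.Subsingleton} = Nat.card ι * (Nat.card β - 1) + 1 := by
  let g : Option (ι × {x // x ≠ b}) → {f : ι → β // {i | f i ≠ b}.Subsingleton}
    | none => ⟨fun _ => b, fun i hi => (hi rfl).elim⟩
    | some (i, x) => ⟨Function.update (fun _ => b) i x,
        Set.subsingleton_singleton.anti fun k hk => by
          by_contra hki
          exact hk (Function.update_of_ne hki _ _)⟩
  have hg : Function.Bijective g := by
    refine ⟨?_, fun ⟨f, hf⟩ => ?_⟩
    · rintro (_ | ⟨i, x⟩) (_ | ⟨k, y⟩) h <;> have h := congrArg Subtype.val h <;>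
        simp only [g] at h
      · rfl
      · exact (y.2 (by simpa using (congrFun h k).symm)).elim
      · exact (x.2 (by simpa using congrFun h i)).elim
      · obtain rfl : i = k := by
          by_contra hik
          exact x.2 (by simpa [hik] using congrFun h i)
        rw [Subtype.ext (by simpa using congrFun h i : (x : β) = y)]
    · by_cases hb : ∀ i, f i = b
      · exact ⟨none, Subtype.ext (funext fun i => (hb i).symm)⟩
      · push Not at hb
        obtain ⟨i, hi⟩ := hb
        refine ⟨some (i, ⟨f i, hi⟩), Subtype.ext (funext fun k => ?_)⟩
        by_cases hki : k = i
        · subst hki; simp [g]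
        · simp only [g, Function.update_of_ne hki]
          by_contra hk
          exact hki (hf (Ne.symm hk) hi)
  have := Fintype.ofFinite β
  classical
  rw [← Nat.card_congr (Equiv.ofBijective g hg), Finite.card_option, Nat.card_prod,
    Nat.card_eq_fintype_card (α := {x // x ≠ b}), Fintype.card_subtype_compl,
    Fintype.card_subtype_eq, Nat.card_eq_fintype_card (α := β)]

section CompleteSplit

variable {ι κ : Type*} {n : ℕ}

abbrev completeSplit (ι κ : Type*) : SimpleGraph (ι ⊕ κ) :=
  joinGraph (⊥ : SimpleGraph ι) (⊤ : SimpleGraph κ)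

/-- `inl v` sits just above the clique vertices of rank `< f v`; `f v = n` puts it on top. -/
def splitPos (f : ι → Fin (n + 1)) (ρ : κ ≃ Fin n) : ι ⊕ κ → ℕ
  | .inl v => 2 * f v + 1
  | .inr r => 2 * ρ r + 2

def splitOrient (f : ι → Fin (n + 1)) (ρ : κ ≃ Fin n) : ι ⊕ κ → ι ⊕ κ → Prop :=
  (completeSplit ι κ).orientBy (splitPos f ρ)

theorem completeSplit_adj_inl_inr (v : ι) (r : κ) : (completeSplit ι κ).Adj (.inl v) (.inr r) :=
  trivial

theorem completeSplit_adj_inr_inr {r s : κ} : (completeSplit ι κ).Adj (.inr r) (.inr s) ↔ r ≠ s :=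
  Iff.rfl

variable {f : ι → Fin (n + 1)} {ρ : κ ≃ Fin n} {v w : ι} {r s : κ}

theorem isOrientation_splitOrient : (completeSplit ι κ).IsOrientation (splitOrient f ρ) := by
  refine SimpleGraph.isOrientation_orientBy ?_
  rintro (v | r) (w | s) h
  · exact h.elim
  · simp only [splitPos]; omega
  · simp only [splitPos]; omega
  · have : (ρ r : ℕ) ≠ ρ s := Fin.val_injective.ne (ρ.injective.ne h)
    simp only [splitPos]; omega

theorem splitOrient_inl_inr : splitOrient f ρ (.inl v) (.inr r) ↔ (f v : ℕ) ≤ ρ r := by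
  simp only [splitOrient, SimpleGraph.orientBy, splitPos]
  exact ⟨fun h => by omega, fun h => ⟨trivial, by omega⟩⟩

theorem splitOrient_inr_inl : splitOrient f ρ (.inr r) (.inl v) ↔ (ρ r : ℕ) < f v := by
  simp only [splitOrient, SimpleGraph.orientBy, splitPos]
  exact ⟨fun h => by omega, fun h => ⟨trivial, by omega⟩⟩

theorem splitOrient_inr_inr : splitOrient f ρ (.inr r) (.inr s) ↔ ρ r < ρ s := by
  simp only [splitOrient, SimpleGraph.orientBy, splitPos]
  refine ⟨fun h => by omega, fun h => ⟨fun hrs => ?_, by omega⟩⟩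
  subst hrs; exact h.false

theorem isMoralOrient_splitOrient (hf : {v | f v ≠ Fin.last n}.Subsingleton) :
    (completeSplit ι κ).IsMoralOrient (splitOrient f ρ) := by
  rintro (v | r) (w | s) (u | t) hac hbc hab
  · exact hac.1.elim
  · rw [splitOrient_inl_inr] at hac hbc
    have hlast : ∀ x : Fin (n + 1), (x : ℕ) ≤ ρ t → x ≠ Fin.last n := by
      rintro x hx rfl
      exact (ρ t).2.not_ge hx
    exact hab (congrArg Sum.inl (hf (hlast _ hac) (hlast _ hbc)))
  · exact hac.1.elim
  all_goals first | trivial | exact fun h => hab (congrArg Sum.inr h)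

variable (f ρ) in
theorem ncard_splitOrient_inr_inl (v : ι) :
    {r | splitOrient f ρ (.inr r) (.inl v)}.ncard = f v := by
  simp_rw [splitOrient_inr_inl]
  exact ρ.ncard_setOf_val_lt (Nat.lt_succ_iff.mp (f v).2)

variable (f ρ) in
theorem ncard_splitOrient_inr_inr (r : κ) :
    {s | splitOrient f ρ (.inr s) (.inr r)}.ncard = ρ r := by
  simp_rw [splitOrient_inr_inr, Fin.lt_def]
  exact ρ.ncard_setOf_val_lt (ρ r).2.le

theorem splitOrient_inj {f' : ι → Fin (n + 1)} {ρ' : κ ≃ Fin n}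
    (h : splitOrient f ρ = splitOrient f' ρ') : f = f' ∧ ρ = ρ' := by
  have hf : f = f' := funext fun v => Fin.ext <| by
    rw [← ncard_splitOrient_inr_inl f ρ, ← ncard_splitOrient_inr_inl f' ρ', h]
  have hρ : ρ = ρ' := Equiv.ext fun r => Fin.ext <| by
    rw [← ncard_splitOrient_inr_inr f ρ, ← ncard_splitOrient_inr_inr f' ρ', h]
  exact ⟨hf, hρ⟩

variable {D : ι ⊕ κ → ι ⊕ κ → Prop}

theorem ncard_rel_inr_inl_le [Finite κ] (hD : (completeSplit ι κ).IsOrientation D)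
    (hAc : IsAcyclicRel D) (h : D (.inl v) (.inr r)) :
    {x | D (.inr x) (.inl v)}.ncard ≤ {x | D (.inr x) (.inr r)}.ncard := by
  refine Set.ncard_le_ncard fun x hx => ?_
  have hxr : x ≠ r := by
    rintro rfl
    exact hD.asymm h hx
  exact (hD.rel_or_rel (completeSplit_adj_inr_inr.mpr hxr)).resolve_right fun hrx =>
    hD.asymm hx (hD.trans_of_adj hAc h hrx trivial)

theorem ncard_rel_inr_inr_lt [Finite κ] (hD : (completeSplit ι κ).IsOrientation D)
    (hAc : IsAcyclicRel D) (h : D (.inr r) (.inl v)) :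
    {x | D (.inr x) (.inr r)}.ncard < {x | D (.inr x) (.inl v)}.ncard :=
  hD.ncard_lt_of_rel (φ := Sum.inr) hAc h fun _ _ => trivial

theorem exists_rel_inl_inr (hD : (completeSplit ι κ).IsOrientation D)
    (hv : {x | D (.inr x) (.inl v)}.ncard ≠ Nat.card κ) : ∃ r, D (.inl v) (.inr r) := by
  by_contra! h
  have huniv : {x | D (.inr x) (.inl v)} = Set.univ := Set.eq_univ_of_forall fun r =>
    (hD.rel_or_rel (completeSplit_adj_inl_inr v r)).resolve_left (h r)
  exact hv (huniv ▸ Set.ncard_univ κ)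

theorem setOf_ncard_ne_subsingleton (hD : (completeSplit ι κ).IsOrientation D)
    (hAc : IsAcyclicRel D) (hMo : (completeSplit ι κ).IsMoralOrient D) :
    {v | {x | D (.inr x) (.inl v)}.ncard ≠ Nat.card κ}.Subsingleton := by
  intro v hv w hw
  obtain ⟨r, hvr⟩ := exists_rel_inl_inr hD hv
  obtain ⟨s, hws⟩ := exists_rel_inl_inr hD hw
  obtain ⟨t, hvt, hwt⟩ : ∃ t, D (.inl v) (.inr t) ∧ D (.inl w) (.inr t) := by
    by_cases hrs : r = s
    · exact ⟨s, hrs ▸ hvr, hws⟩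
    rcases hD.rel_or_rel (completeSplit_adj_inr_inr.mpr hrs) with h | h
    · exact ⟨s, hD.trans_of_adj hAc hvr h trivial, hws⟩
    · exact ⟨r, hvr, hD.trans_of_adj hAc hws h trivial⟩
  by_contra hvw
  exact hMo _ _ _ hvt hwt (fun h => hvw (Sum.inl_injective h))

theorem exists_splitOrient_eq [Finite κ] (hD : (completeSplit ι κ).IsOrientation D)
    (hAc : IsAcyclicRel D) (hMo : (completeSplit ι κ).IsMoralOrient D) :
    ∃ f : ι → Fin (Nat.card κ + 1), {v | f v ≠ Fin.last _}.Subsingleton ∧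
      ∃ ρ : κ ≃ Fin (Nat.card κ), splitOrient f ρ = D := by
  obtain ⟨ρ, hρ⟩ := (hD.comap Sum.inr).exists_equiv_fin_ncard (hAc.comap Sum.inr)
  let f : ι → Fin (Nat.card κ + 1) := fun v =>
    ⟨{x | D (.inr x) (.inl v)}.ncard, Nat.lt_succ_of_le (Set.ncard_le_card _)⟩
  refine ⟨f, (setOf_ncard_ne_subsingleton hD hAc hMo).anti fun v hv h => hv (Fin.ext h), ρ,
    (hD.eq_of_le isOrientation_splitOrient fun a b h => ⟨hD.adj h, ?_⟩).symm⟩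
  rcases a with v | r <;> rcases b with w | s
  · exact (hD.adj h).elim
  · have := ncard_rel_inr_inl_le hD hAc h
    simp only [splitPos, f, hρ]; omega
  · have := ncard_rel_inr_inr_lt hD hAc h
    simp only [splitPos, f, hρ]; omega
  · have := (hD.comap Sum.inr).ncard_setOf_rel_lt (hAc.comap Sum.inr) h
    simp only [splitPos, hρ]; omega

end CompleteSplit

theorem moralAcyclicCount_completeSplit {ι κ : Type*} [Finite ι] [Finite κ] :
    moralAcyclicCount (completeSplit ι κ) =
      (Nat.card ι * Nat.card κ + 1) * (Nat.card κ).factorial := by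
  classical
  let encode : {f : ι → Fin (Nat.card κ + 1) // {v | f v ≠ Fin.last _}.Subsingleton} ×
      (κ ≃ Fin (Nat.card κ)) → ι ⊕ κ → ι ⊕ κ → Prop := fun p => splitOrient p.1.1 p.2
  have hinj : encode.Injective := fun p q h =>
    have hpq := splitOrient_inj h
    Prod.ext (Subtype.ext hpq.1) hpq.2
  have hrange : Set.range encode = {D | (completeSplit ι κ).IsOrientation D ∧
      IsAcyclicRel D ∧ (completeSplit ι κ).IsMoralOrient D} := by
    ext D
    constructor
    · rintro ⟨⟨⟨f, hf⟩, ρ⟩, rfl⟩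
      exact ⟨isOrientation_splitOrient, SimpleGraph.isAcyclicRel_orientBy _,
        isMoralOrient_splitOrient hf⟩
    · rintro ⟨hD, hAc, hMo⟩
      obtain ⟨f, hf, ρ, rfl⟩ := exists_splitOrient_eq hD hAc hMo
      exact ⟨(⟨f, hf⟩, ρ), rfl⟩
  have hperm : Nat.card (κ ≃ Fin (Nat.card κ)) = (Nat.card κ).factorial :=
    (Nat.card_congr (Equiv.equivCongr (.refl κ) (Finite.equivFin κ).symm)).trans Nat.card_perm
  rw [moralAcyclicCount, ← hrange, Set.ncard_range_of_injective hinj, Nat.card_prod,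
    Nat.card_setOf_ne_subsingleton, hperm, Nat.card_fin, Nat.add_sub_cancel]

theorem count_complete_split_general (j m : ℕ) :
    moralAcyclicCount (joinGraph (⊥ : SimpleGraph (Fin j)) (⊤ : SimpleGraph (Fin m)))
      = (j * m + 1) * Nat.factorial m := by
  simpa using moralAcyclicCount_completeSplit (ι := Fin j) (κ := Fin m)

theorem count_complete_split (j m : ℕ) (hj : 1 ≤ j) :
    moralAcyclicCount (joinGraph (⊥ : SimpleGraph (Fin j)) (⊤ : SimpleGraph (Fin m)))
      = (j * m + 1) * Nat.factorial m :=
  count_complete_split_general j m
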